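/- arXiv:2001.10774 — 14 statements merged into one kernel-verified Lean document; each statement's English description precedes it below -/
import Mathlib

section
/- Let X be a q-cycle set (a set with two binary operations · and : such that σ_x(y)=x·y is bijective for each x, and the identities (x·y)·(x·z)=(y:x)·(y·z), (x:y):(x:z)=(y·x):(y:z), (x·y):(x·z)=(y:x)·(y:z) hold). Then the map r: X×X → X×X defined by r(x,y) = (σ_x^{-1}(y), σ_x^{-1}(y):x) is a set-theoretic solution of the Yang-Baxter equation, i.e., (r×id)(id×r)(r×id) = (id×r)(r×id)(id×r). -/
/-- `r × id` on triples. -/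
def ybeR1 {X : Type*} (r : X × X → X × X) : X × X × X → X × X × X :=
  fun p => ((r (p.1, p.2.1)).1, (r (p.1, p.2.1)).2, p.2.2)

/-- `id × r` on triples. -/
def ybeR2 {X : Type*} (r : X × X → X × X) : X × X × X → X × X × X :=
  fun p => (p.1, (r (p.2.1, p.2.2)).1, (r (p.2.1, p.2.2)).2)

theorem stmt_0 {X : Type*} (d c : X → X → X)
    (hσ : ∀ x, Function.Bijective (fun y => d x y))
    (h1 : ∀ x y z, d (d x y) (d x z) = d (c y x) (d y z))
    (h2 : ∀ x y z, c (c x y) (c x z) = c (d y x) (c y z))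
    (h3 : ∀ x y z, c (d x y) (d x z) = d (c y x) (c y z))
    (σinv : X → X → X)
    (hinv1 : ∀ x y, d x (σinv x y) = y)
    (hinv2 : ∀ x y, σinv x (d x y) = y)
    (r : X × X → X × X)
    (hr : ∀ x y, r (x, y) = (σinv x y, c (σinv x y) x)) :
    ybeR1 r ∘ ybeR2 r ∘ ybeR1 r = ybeR2 r ∘ ybeR1 r ∘ ybeR2 r := by
  funext p
  obtain ⟨x, y, z⟩ := p
  simp only [ybeR1, ybeR2, Function.comp_apply, hr]
  set u := σinv x y with hu
  set v := σinv (c u x) z with hv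
  set w := σinv u v with hw
  set a := σinv y z with ha
  set b := σinv x a with hb
  have hy : d x u = y := hinv1 x y
  have hz : d (c u x) v = z := hinv1 _ z
  have hwv : d u w = v := hinv1 u v
  have hza : d y a = z := hinv1 y z
  have hab : d x b = a := hinv1 x a
  have key : d x w = a := by
    apply (hσ y).injective
    show d y (d x w) = d y a
    have h := h1 x u w
    rw [hy, hwv, hz] at h
    rw [h, hza]
  have hwb : w = b := by
    apply (hσ x).injective
    show d x w = d x b
    rw [key, hab]
  have g2 : d (c w x) (c w u) = c a y := by
    have h := h3 x w u
    rw [key, hy] at h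
    exact h.symm
  have g2' : σinv (c b x) (c a y) = c w u := by
    rw [← hwb, ← g2, hinv2]
  have g3 : c (c w u) (c w x) = c v (c u x) := by
    have h := h2 w u x
    rw [hwv] at h
    exact h
  rw [g2', ← hwb, ← g3]
end

section
/- Let (X,r) be a left non-degenerate set-theoretic solution of the Yang-Baxter equation, with r(x,y) = (λ_x(y), ρ_y(x)) and each λ_x bijective. Then X with the operations x·y := λ_x^{-1}(y) and x:y := ρ_{λ_y^{-1}(x)}(y) is a q-cycle set. -/
theorem stmt_1 {X : Type*} (r : X × X → X × X) (lam rho : X → X → X)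
    (hr : ∀ x y, r (x, y) = (lam x y, rho y x))
    (hlam : ∀ x, Function.Bijective (lam x))
    (hYBE : ybeR1 r ∘ ybeR2 r ∘ ybeR1 r = ybeR2 r ∘ ybeR1 r ∘ ybeR2 r)
    (laminv : X → X → X)
    (hinv1 : ∀ x y, lam x (laminv x y) = y)
    (hinv2 : ∀ x y, laminv x (lam x y) = y)
    (d c : X → X → X)
    (hd : ∀ x y, d x y = laminv x y)
    (hc : ∀ x y, c x y = rho (laminv y x) y) :
    (∀ x, Function.Bijective (fun y => d x y)) ∧
    (∀ x y z, d (d x y) (d x z) = d (c y x) (d y z)) ∧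
    (∀ x y z, c (c x y) (c x z) = c (d y x) (c y z)) ∧
    (∀ x y z, c (d x y) (d x z) = d (c y x) (c y z)) := by
  have key := fun (a b w : X) => congrFun hYBE (a, b, w)
  simp only [Function.comp, ybeR1, ybeR2, hr, Prod.mk.injEq] at key
  have E1 : ∀ a b w, lam (lam a b) (lam (rho b a) w) = lam a (lam b w) :=
    fun a b w => (key a b w).1
  have E2 : ∀ a b w, rho (lam (rho b a) w) (lam a b) = lam (rho (lam b w) a) (rho w b) :=
    fun a b w => (key a b w).2.1
  have E3 : ∀ a b w, rho w (rho b a) = rho (rho w b) (rho (lam b w) a) :=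
    fun a b w => (key a b w).2.2
  have hinj : ∀ u : X, Function.Injective (lam u) := fun u => (hlam u).injective
  -- Identity (ii) in raw form
  have P2 : ∀ x y z, laminv (laminv x y) (laminv x z)
      = laminv (rho (laminv x y) x) (laminv y z) := by
    intro x y z
    have e1 := E1 x (laminv x y) (laminv (laminv x y) (laminv x z))
    rw [hinv1, hinv1, hinv1] at e1
    -- e1 : lam y (lam (rho (laminv x y) x) (laminv (laminv x y) (laminv x z))) = z
    apply hinj (rho (laminv x y) x)
    rw [hinv1]
    apply hinj y
    rw [hinv1]
    exact e1
  -- Identity (iv) in raw form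
  have P4 : ∀ x y z, rho (laminv (laminv x z) (laminv x y)) (laminv x z)
      = laminv (rho (laminv x y) x) (rho (laminv z y) z) := by
    intro x y z
    have e2 := E2 x (laminv x z) (laminv (rho (laminv x z) x) (laminv z y))
    rw [hinv1, hinv1] at e2
    rw [← P2 x z y] at e2
    rw [hinv1] at e2
    -- e2 : rho (laminv z y) z
    --    = lam (rho (laminv x y) x) (rho (laminv (laminv x z) (laminv x y)) (laminv x z))
    rw [e2, hinv2]
  -- Identity (iii) in raw form
  have P3 : ∀ x y z, rho (laminv (rho (laminv z x) z) (rho (laminv y x) y)) (rho (laminv z x) z)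
      = rho (laminv (rho (laminv z y) z) (laminv y x)) (rho (laminv z y) z) := by
    intro x y z
    have e3 := E3 z (laminv z y) (laminv (rho (laminv z y) z) (laminv y x))
    rw [← P2 z y x] at e3
    rw [hinv1] at e3
    rw [P4 z x y] at e3
    -- e3 : rho (laminv (laminv z y) (laminv z x)) (rho (laminv z y) z)
    --    = rho (laminv (rho (laminv z x) z) (rho (laminv y x) y)) (rho (laminv z x) z)
    rw [← P2 z y x]
    exact e3.symm
  refine ⟨?_, ?_, ?_, ?_⟩
  · intro x
    have hdx : (fun y => d x y) = laminv x := funext (hd x)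
    rw [hdx]
    exact Function.bijective_iff_has_inverse.mpr ⟨lam x, hinv1 x, hinv2 x⟩
  · intro x y z
    simp only [hd, hc]
    exact P2 x y z
  · intro x y z
    simp only [hd, hc]
    exact P3 x y z
  · intro x y z
    simp only [hd, hc]
    exact P4 x y z
end

section
/- Let (X,·,:) be a regular q-cycle set such that the permutation group G(X) generated by all σ_x and δ_x is finite. Then the squaring maps q(x) = x·x and q'(x) = x:x are surjective. -/
/-!
The image of the squaring map `q(x) = x·x` is invariant under every `σ_w`: taking
`x = δ_y⁻¹ w` in `(x·y)·(x·y) = (y:x)·(y·y)` gives `σ_w (q y) = q (x·y)`. As `σ_y` has finite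
order, `σ_y⁻¹` is a natural power of `σ_y`, so the image is invariant under `σ_y⁻¹` too and
contains `σ_y⁻¹ (q y) = y`.
Exchanging the roles of `·` and `:` gives the same for `q'`.
-/

open Function Set

theorem Set.MapsTo.perm_inv_of_isOfFinOrder {α : Type*} {f : Equiv.Perm α} {s : Set α}
    (hf : IsOfFinOrder f) (h : MapsTo f s s) : MapsTo ⇑f⁻¹ s s := by
  obtain ⟨n, hn⟩ := hf.mem_powers_iff_mem_zpowers.2 (inv_mem (Subgroup.mem_zpowers f))
  rw [← hn]
  exact h.perm_pow n

theorem isOfFinOrder_of_mem_closure {G : Type*} [Group G] {s : Set G} {g : G}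
    (hfin : Finite (Subgroup.closure s)) (hg : g ∈ s) : IsOfFinOrder g :=
  (Subgroup.closure s).subtype.isOfFinOrder
    (isOfFinOrder_of_finite (⟨g, Subgroup.subset_closure hg⟩ : Subgroup.closure s))

theorem surjective_squaring_of_isOfFinOrder {X : Type*} (σ δ : X → Equiv.Perm X)
    (hσδ : ∀ x y z, σ (σ x y) (σ x z) = σ (δ y x) (σ y z)) (hfin : ∀ y, IsOfFinOrder (σ y)) :
    Surjective fun x => σ x x := by
  have hmaps : ∀ w, MapsTo (σ w) (range fun x => σ x x) (range fun x => σ x x) := by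
    rintro w _ ⟨y, rfl⟩
    exact ⟨σ ((δ y).symm w) y, by simp only [hσδ, Equiv.apply_symm_apply]⟩
  intro y
  obtain ⟨a, ha⟩ := (hmaps y).perm_inv_of_isOfFinOrder (hfin y) ⟨y, rfl⟩
  exact ⟨a, by simpa using ha⟩

theorem stmt_3_general {X : Type*} (d c : X → X → X)
    (σ δ : X → Equiv.Perm X)
    (hσ : ∀ x y, σ x y = d x y)
    (hδ : ∀ x y, δ x y = c x y)
    (h1 : ∀ x y z, d (d x y) (d x z) = d (c y x) (d y z))
    (h2 : ∀ x y z, c (c x y) (c x z) = c (d y x) (c y z))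
    (hfin : Finite (Subgroup.closure (Set.range σ ∪ Set.range δ) : Subgroup (Equiv.Perm X))) :
    Function.Surjective (fun x => d x x) ∧ Function.Surjective (fun x => c x x) := by
  obtain rfl : d = fun x y => σ x y := funext₂ fun x y => (hσ x y).symm
  obtain rfl : c = fun x y => δ x y := funext₂ fun x y => (hδ x y).symm
  exact ⟨surjective_squaring_of_isOfFinOrder σ δ h1
      fun y => isOfFinOrder_of_mem_closure hfin (Or.inl ⟨y, rfl⟩),
    surjective_squaring_of_isOfFinOrder δ σ h2
      fun y => isOfFinOrder_of_mem_closure hfin (Or.inr ⟨y, rfl⟩)⟩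

theorem stmt_3 {X : Type*} (d c : X → X → X)
    (σ δ : X → Equiv.Perm X)
    (hσ : ∀ x y, σ x y = d x y)
    (hδ : ∀ x y, δ x y = c x y)
    (h1 : ∀ x y z, d (d x y) (d x z) = d (c y x) (d y z))
    (h2 : ∀ x y z, c (c x y) (c x z) = c (d y x) (c y z))
    (h3 : ∀ x y z, c (d x y) (d x z) = d (c y x) (c y z))
    (hfin : Finite (Subgroup.closure (Set.range σ ∪ Set.range δ) : Subgroup (Equiv.Perm X))) :
    Function.Surjective (fun x => d x x) ∧ Function.Surjective (fun x => c x x) :=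
  stmt_3_general d c σ δ hσ hδ h1 h2 hfin
end

section
/- Every finite regular q-cycle set is non-degenerate; that is, if X is finite, each σ_x and each δ_x is bijective, then the squaring maps q(x)=x·x and q'(x)=x:x are bijections of X. -/
lemma key_sq {X : Type*} [Finite X] (d c : X → X → X)
    (hσ : ∀ x, Function.Bijective (fun y => d x y))
    (hδ : ∀ x, Function.Bijective (fun y => c x y))
    (h : ∀ x y, d (d x y) (d x y) = d (c y x) (d y y)) :
    Function.Bijective (fun x => d x x) := by
  rw [← Finite.injective_iff_bijective, Finite.injective_iff_surjective]
  set S : Set X := Set.range (fun x => d x x) with hS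
  have hsub : ∀ u : X, (fun y => d u y) '' S ⊆ S := by
    rintro u _ ⟨_, ⟨y, rfl⟩, rfl⟩
    obtain ⟨x, hx⟩ := (hδ y).2 u
    exact ⟨d x y, by simp only at hx ⊢; rw [h x y, hx]⟩
  have heq : ∀ u : X, (fun y => d u y) '' S = S := by
    intro u
    apply Set.eq_of_subset_of_ncard_le (hsub u) _ (Set.toFinite S)
    rw [Set.ncard_image_of_injective _ (hσ u).1]
  intro t
  have ht : d t t ∈ S := ⟨t, rfl⟩
  rw [← heq t] at ht
  obtain ⟨s, hsS, hs⟩ := ht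
  have : s = t := (hσ t).1 (by simpa using hs)
  rw [← this]
  exact hsS

theorem stmt_4 {X : Type*} [Finite X] (d c : X → X → X)
    (hσ : ∀ x, Function.Bijective (fun y => d x y))
    (hδ : ∀ x, Function.Bijective (fun y => c x y))
    (h1 : ∀ x y z, d (d x y) (d x z) = d (c y x) (d y z))
    (h2 : ∀ x y z, c (c x y) (c x z) = c (d y x) (c y z))
    (h3 : ∀ x y z, c (d x y) (d x z) = d (c y x) (c y z)) :
    Function.Bijective (fun x => d x x) ∧ Function.Bijective (fun x => c x x) := by
  exact ⟨key_sq d c hσ hδ (fun x y => h1 x y y),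
         key_sq c d hδ hσ (fun x y => h2 x y y)⟩
end

section
/- Every finite bijective left non-degenerate set-theoretic solution (X,r) of the Yang-Baxter equation is non-degenerate, i.e., each ρ_y is also a bijection of X. -/
theorem stmt_5 {X : Type*} [Finite X] (r : X × X → X × X) (lam rho : X → X → X)
    (hr : ∀ x y, r (x, y) = (lam x y, rho y x))
    (hYBE : ybeR1 r ∘ ybeR2 r ∘ ybeR1 r = ybeR2 r ∘ ybeR1 r ∘ ybeR2 r)
    (hbij : Function.Bijective r)
    (hlam : ∀ x, Function.Bijective (lam x)) :
    ∀ y, Function.Bijective (rho y) := by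
  classical
  -- λ-cocycle identity: λ_{λ_x y} (λ_{ρ_y x} z) = λ_x (λ_y z)
  have cocycle : ∀ x y z, lam (lam x y) (lam (rho y x) z) = lam x (lam y z) := by
    intro x y z
    have h := congrFun hYBE (x, y, z)
    simp only [Function.comp, ybeR1, ybeR2, hr] at h
    exact congrArg Prod.fst h
  -- equivalences for λ
  let e : X → X ≃ X := fun x => Equiv.ofBijective _ (hlam x)
  have he : ∀ x y, e x y = lam x y := fun _ _ => rfl
  -- the diagonal map q
  let q : X → X := fun x => (e x).symm x
  have lamq : ∀ x, lam x (q x) = x := by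
    intro x
    have := (e x).apply_symm_apply x
    rwa [he] at this
  -- key identity: q (λ_x y) = λ_{ρ_y x} (q y)
  have F4 : ∀ x y, q (lam x y) = lam (rho y x) (q y) := by
    intro x y
    apply (hlam (lam x y)).1
    rw [lamq (lam x y), cocycle, lamq y]
  -- range of q is stable under λ_z⁻¹
  have stab : ∀ z c, c ∈ Set.range q → (e z).symm c ∈ Set.range q := by
    rintro z c ⟨t, rfl⟩
    obtain ⟨⟨u, w⟩, hp⟩ := hbij.2 (t, z)
    rw [hr] at hp
    obtain ⟨h1, h2⟩ := Prod.mk.injEq _ _ _ _ ▸ hp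
    refine ⟨w, ?_⟩
    apply (e z).injective
    rw [Equiv.apply_symm_apply, he, ← h2, ← F4, h1]
  -- q is surjective
  have qsurj : Function.Surjective q := by
    intro x
    -- consider the injective self-map of the (finite) range of q given by (e x).symm
    have : ∀ s : Set.range q, ((e x).symm s.1) ∈ Set.range q := fun s => stab x s.1 s.2
    let F : Set.range q → Set.range q := fun s => ⟨(e x).symm s.1, this s⟩
    have Finj : Function.Injective F := by
      intro a b hab
      have := congrArg Subtype.val hab
      exact Subtype.ext ((e x).symm.injective this)
    have Fsurj : Function.Surjective F := (Finite.injective_iff_surjective).mp Finj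
    have hqx : q x ∈ Set.range q := ⟨x, rfl⟩
    obtain ⟨s, hs⟩ := Fsurj ⟨q x, hqx⟩
    have hs' : (e x).symm s.1 = q x := congrArg Subtype.val hs
    have : s.1 = lam x (q x) := by
      have := (Equiv.symm_apply_eq (e x)).mp hs'
      rwa [he] at this
    rw [lamq x] at this
    exact this ▸ s.2
  have qinj : Function.Injective q := (Finite.injective_iff_surjective).mpr qsurj
  -- conclude
  intro y
  rw [← Finite.injective_iff_bijective]
  intro a b hab
  have h1 : q (lam a y) = q (lam b y) := by rw [F4, F4, hab]
  have h2 : lam a y = lam b y := qinj h1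
  have h3 : r (a, y) = r (b, y) := by rw [hr, hr, h2, hab]
  exact (Prod.mk.injEq _ _ _ _ ▸ hbij.1 h3).1
end

section
/- Let X be a regular q-cycle set such that every orbit of X under the action of the permutation group G(X) (generated by all σ_x and δ_x) is finite. Then X is non-degenerate: the squaring maps q(x)=x·x and q'(x)=x:x are bijections. -/
section Aux

variable {X : Type*} (σ δ : X → Equiv.Perm X)

/-- The group generated by all σ's and δ's. -/
private def Gc : Subgroup (Equiv.Perm X) :=
  Subgroup.closure (Set.range σ ∪ Set.range δ)

/-- The orbit of `x`. -/
private def Orb (x : X) : Set X :=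
  {y : X | ∃ g ∈ Gc σ δ, (g : Equiv.Perm X) x = y}

private lemma mem_orb_self (x : X) : x ∈ Orb σ δ x :=
  ⟨1, one_mem _, rfl⟩

private lemma sigma_mem (w : X) : σ w ∈ Gc σ δ :=
  Subgroup.subset_closure (Or.inl ⟨w, rfl⟩)

private lemma delta_mem (w : X) : δ w ∈ Gc σ δ :=
  Subgroup.subset_closure (Or.inr ⟨w, rfl⟩)

private lemma orb_smul {g : Equiv.Perm X} (hg : g ∈ Gc σ δ) {x y : X}
    (hy : y ∈ Orb σ δ x) : g y ∈ Orb σ δ x := by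
  obtain ⟨h, hh, rfl⟩ := hy
  exact ⟨g * h, mul_mem hg hh, rfl⟩

private lemma orb_eq {x y : X} (hy : y ∈ Orb σ δ x) : Orb σ δ y = Orb σ δ x := by
  obtain ⟨g, hg, rfl⟩ := hy
  ext z
  constructor
  · rintro ⟨h, hh, rfl⟩
    exact ⟨h * g, mul_mem hh hg, rfl⟩
  · rintro ⟨h, hh, rfl⟩
    exact ⟨h * g⁻¹, mul_mem hh (inv_mem hg), by simp⟩

private lemma bij_of (horb : ∀ x : X, Set.Finite (Orb σ δ x)) (Q : X → X)
    (h0 : ∀ x, Q x ∈ Orb σ δ x)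
    (hA : ∀ w y, ∃ z ∈ Orb σ δ y, σ w (Q y) = Q z)
    (hB : ∀ w y, ∃ z ∈ Orb σ δ y, δ w (Q y) = Q z) :
    Function.Bijective Q := by
  have hmaps : ∀ x : X, Set.MapsTo Q (Orb σ δ x) (Orb σ δ x) := by
    intro x z hz
    have := h0 z
    rwa [orb_eq σ δ hz] at this
  -- Key: Q is surjective from each orbit onto itself.
  have key : ∀ x : X, Q '' (Orb σ δ x) = Orb σ δ x := by
    intro x
    set T : Set X := Q '' (Orb σ δ x) with hT
    have hTsub : T ⊆ Orb σ δ x := (hmaps x).image_subset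
    have hTfin : T.Finite := (horb x).subset hTsub
    have hmapσ : ∀ w, Set.MapsTo (σ w) T T := by
      rintro w _ ⟨y, hy, rfl⟩
      obtain ⟨z, hz, e⟩ := hA w y
      rw [e]
      exact ⟨z, by rwa [← orb_eq σ δ hy], rfl⟩
    have hmapδ : ∀ w, Set.MapsTo (δ w) T T := by
      rintro w _ ⟨y, hy, rfl⟩
      obtain ⟨z, hz, e⟩ := hB w y
      rw [e]
      exact ⟨z, by rwa [← orb_eq σ δ hy], rfl⟩
    have himgσ : ∀ w, (σ w) '' T = T := fun w =>
      (((hTfin.injOn_iff_bijOn_of_mapsTo (hmapσ w)).mp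
        ((σ w).injective.injOn)).surjOn.image_eq_of_mapsTo (hmapσ w))
    have himgδ : ∀ w, (δ w) '' T = T := fun w =>
      (((hTfin.injOn_iff_bijOn_of_mapsTo (hmapδ w)).mp
        ((δ w).injective.injOn)).surjOn.image_eq_of_mapsTo (hmapδ w))
    have hstab : ∀ g ∈ Gc σ δ, (g : Equiv.Perm X) '' T = T := by
      intro g hg
      induction hg using Subgroup.closure_induction with
      | mem g hgmem =>
        rcases hgmem with ⟨w, rfl⟩ | ⟨w, rfl⟩
        · exact himgσ w
        · exact himgδ w
      | one => simp
      | mul a b _ _ ha hb =>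
        have : ((a * b : Equiv.Perm X) : X → X) = a ∘ b := rfl
        rw [this, Set.image_comp, hb, ha]
      | inv a _ ha =>
        conv_lhs => rw [← ha]
        rw [← Set.image_comp]
        simp
    apply Set.Subset.antisymm hTsub
    intro t ht
    have hQx : Q x ∈ T := ⟨x, mem_orb_self σ δ x, rfl⟩
    have ht' : t ∈ Orb σ δ (Q x) := by rwa [orb_eq σ δ (h0 x)]
    obtain ⟨g, hg, rfl⟩ := ht'
    rw [← hstab g hg]
    exact ⟨Q x, hQx, rfl⟩
  constructor
  · -- injective
    intro a b hab
    have hOrb : Orb σ δ a = Orb σ δ b := by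
      rw [← orb_eq σ δ (h0 a), hab, orb_eq σ δ (h0 b)]
    have hbij : Set.BijOn Q (Orb σ δ a) (Orb σ δ a) :=
      ((horb a).surjOn_iff_bijOn_of_mapsTo (hmaps a)).mp
        (by rw [Set.SurjOn, key a])
    exact hbij.injOn (mem_orb_self σ δ a) (hOrb ▸ mem_orb_self σ δ b) hab
  · -- surjective
    intro t
    have : t ∈ Q '' (Orb σ δ t) := by rw [key t]; exact mem_orb_self σ δ t
    obtain ⟨z, _, hz⟩ := this
    exact ⟨z, hz⟩

end Aux

theorem stmt_7 {X : Type*} (d c : X → X → X)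
    (σ δ : X → Equiv.Perm X)
    (hσ : ∀ x y, σ x y = d x y)
    (hδ : ∀ x y, δ x y = c x y)
    (h1 : ∀ x y z, d (d x y) (d x z) = d (c y x) (d y z))
    (h2 : ∀ x y z, c (c x y) (c x z) = c (d y x) (c y z))
    (h3 : ∀ x y z, c (d x y) (d x z) = d (c y x) (c y z))
    (horb : ∀ x : X, Set.Finite
      {y : X | ∃ g ∈ Subgroup.closure (Set.range σ ∪ Set.range δ),
        (g : Equiv.Perm X) x = y}) :
    Function.Bijective (fun x => d x x) ∧ Function.Bijective (fun x => c x x) := by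
  have horb' : ∀ x : X, Set.Finite (Orb σ δ x) := horb
  constructor
  · apply bij_of σ δ horb' (fun x => d x x)
    · intro x
      exact ⟨σ x, sigma_mem σ δ x, hσ x x⟩
    · intro w y
      refine ⟨d (((δ y).symm) w) y, ⟨σ ((δ y).symm w), sigma_mem σ δ _, hσ _ _⟩, ?_⟩
      have hw : c y ((δ y).symm w) = w := by rw [← hδ]; exact (δ y).apply_symm_apply w
      rw [hσ, ← hw, ← h1 ((δ y).symm w) y y]; rw [hw]
    · intro w y
      refine ⟨c (((σ y).symm) w) y, ⟨δ ((σ y).symm w), delta_mem σ δ _, hδ _ _⟩, ?_⟩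
      have hw : d y ((σ y).symm w) = w := by rw [← hσ]; exact (σ y).apply_symm_apply w
      rw [hδ, ← hw, h3 y ((σ y).symm w) y]; rw [hw]
  · apply bij_of σ δ horb' (fun x => c x x)
    · intro x
      exact ⟨δ x, delta_mem σ δ x, hδ x x⟩
    · intro w y
      refine ⟨d (((δ y).symm) w) y, ⟨σ ((δ y).symm w), sigma_mem σ δ _, hσ _ _⟩, ?_⟩
      have hw : c y ((δ y).symm w) = w := by rw [← hδ]; exact (δ y).apply_symm_apply w
      rw [hσ, ← hw, ← h3 ((δ y).symm w) y y]; rw [hw]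
    · intro w y
      refine ⟨c (((σ y).symm) w) y, ⟨δ ((σ y).symm w), delta_mem σ δ _, hδ _ _⟩, ?_⟩
      have hw : d y ((σ y).symm w) = w := by rw [← hσ]; exact (σ y).apply_symm_apply w
      rw [hδ, ← hw, ← h2 ((σ y).symm w) y y]; rw [hw]
end

section
/- Let (X,·,:) be a regular q-cycle set and define x ∼ y iff σ_x = σ_y and δ_x = δ_y. Then ∼ is a congruence: if x ∼ y and z ∼ t, then x·z ∼ y·t and x:z ∼ y:t. -/
theorem stmt_8 {X : Type*} (d c : X → X → X)
    (hσ : ∀ x, Function.Bijective (fun y => d x y))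
    (hδ : ∀ x, Function.Bijective (fun y => c x y))
    (h1 : ∀ x y z, d (d x y) (d x z) = d (c y x) (d y z))
    (h2 : ∀ x y z, c (c x y) (c x z) = c (d y x) (c y z))
    (h3 : ∀ x y z, c (d x y) (d x z) = d (c y x) (c y z)) :
    ∀ x y z t, (d x = d y ∧ c x = c y) → (d z = d t ∧ c z = c t) →
      (d (d x z) = d (d y t) ∧ c (d x z) = c (d y t)) ∧
      (d (c x z) = d (c y t) ∧ c (c x z) = c (c y t)) := by
  intro x y z t ⟨hd, hc⟩ ⟨hd', hc'⟩
  rw [← hd, ← hc]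
  have sx := (hσ x).2
  have dx := (hδ x).2
  refine ⟨⟨?_, ?_⟩, ?_, ?_⟩
  · funext w
    obtain ⟨w', hw⟩ := sx w
    simp only at hw
    rw [← hw, h1 x z w', h1 x t w', hd', hc']
  · funext w
    obtain ⟨w', hw⟩ := sx w
    simp only at hw
    rw [← hw, h3 x z w', h3 x t w', hc']
  · funext w
    obtain ⟨w', hw⟩ := dx w
    simp only at hw
    rw [← hw, ← h3 z x w', ← h3 t x w', hd']
  · funext w
    obtain ⟨w', hw⟩ := dx w
    simp only at hw
    rw [← hw, h2 x z w', h2 x t w', hd', hc']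
end

section
/- Let X be a regular q-cycle set whose retraction Ret(X) = X/∼ is a non-degenerate q-cycle set. Then X itself is non-degenerate, i.e., the squaring maps q(x)=x·x and q'(x)=x:x are bijections of X. -/
/- The retraction Ret(X) = X/∼, where x ∼ y iff σ_x = σ_y and δ_x = δ_y, carries the
induced operations; its squaring maps send the class of x to the classes of x·x and x:x.
Non-degeneracy of Ret(X) is expressed below directly in terms of classes. -/
theorem stmt_9 {X : Type*} (d c : X → X → X)
    (hσ : ∀ x, Function.Bijective (fun y => d x y))
    (hδ : ∀ x, Function.Bijective (fun y => c x y))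
    (h1 : ∀ x y z, d (d x y) (d x z) = d (c y x) (d y z))
    (h2 : ∀ x y z, c (c x y) (c x z) = c (d y x) (c y z))
    (h3 : ∀ x y z, c (d x y) (d x z) = d (c y x) (c y z))
    -- the squaring map q̄ of Ret(X) is injective and surjective
    (hqinj : ∀ x y, (d (d x x) = d (d y y) ∧ c (d x x) = c (d y y)) →
      (d x = d y ∧ c x = c y))
    (hqsurj : ∀ x, ∃ y, d (d y y) = d x ∧ c (d y y) = c x)
    -- the squaring map q̄' of Ret(X) is injective and surjective
    (hq'inj : ∀ x y, (d (c x x) = d (c y y) ∧ c (c x x) = c (c y y)) →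
      (d x = d y ∧ c x = c y))
    (hq'surj : ∀ x, ∃ y, d (c y y) = d x ∧ c (c y y) = c x) :
    Function.Bijective (fun x => d x x) ∧ Function.Bijective (fun x => c x x) := by
  have σinj : ∀ x {a b : X}, d x a = d x b → a = b := fun x {a b} h => (hσ x).1 h
  have δinj : ∀ x {a b : X}, c x a = c x b → a = b := fun x {a b} h => (hδ x).1 h
  -- injectivity of q
  have qinj : Function.Injective (fun x : X => d x x) := by
    intro a b hab
    simp only at hab
    obtain ⟨hd, -⟩ := hqinj a b ⟨by rw [hab], by rw [hab]⟩
    have : d a a = d a b := by rw [hab, ← hd]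
    exact σinj a this
  -- injectivity of q'
  have q'inj : Function.Injective (fun x : X => c x x) := by
    intro a b hab
    simp only at hab
    obtain ⟨-, hc⟩ := hq'inj a b ⟨by rw [hab], by rw [hab]⟩
    have : c a a = c a b := by rw [hab, ← hc]
    exact δinj a this
  -- surjectivity of q
  have qsurj : Function.Surjective (fun x : X => d x x) := by
    intro t
    obtain ⟨y, hyd, hyc⟩ := hqsurj t
    obtain ⟨s, hs⟩ := (hσ y).2 t
    have hs' : d y s = t := hs
    -- key : q (c s y) = q (c y y)
    have key : d (c s y) (c s y) = d (c y y) (c y y) := by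
      have e1 := h3 y s y  -- c (d y s) (d y y) = d (c s y) (c s y)
      have e2 := h3 y y y  -- c (d y y) (d y y) = d (c y y) (c y y)
      rw [hs'] at e1       -- c t (d y y) = d (c s y) (c s y)
      rw [congrFun hyc (d y y)] at e2  -- c t (d y y) = d (c y y) (c y y)
      exact e1.symm.trans e2
    have p_eq : c s y = c y y := qinj key
    refine ⟨s, ?_⟩
    show d s s = t
    have e1 := h1 y s s  -- d (d y s) (d y s) = d (c s y) (d s s)
    have e2 := h1 y y s  -- d (d y y) (d y s) = d (c y y) (d y s)
    rw [hs', p_eq] at e1 -- d t t = d (c y y) (d s s)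
    rw [congrFun hyd (d y s), hs'] at e2  -- d t t = d (c y y) t
    exact σinj _ (e1.symm.trans e2)
  -- surjectivity of q'
  have q'surj : Function.Surjective (fun x : X => c x x) := by
    intro t
    obtain ⟨y, hyd, hyc⟩ := hq'surj t
    obtain ⟨s, hs⟩ := (hδ y).2 t
    have hs' : c y s = t := hs
    -- key : q' (d s y) = q' (d y y)
    have key : c (d s y) (d s y) = c (d y y) (d y y) := by
      have e1 := h3 s y y  -- c (d s y) (d s y) = d (c y s) (c y y)
      have e2 := h3 y y y  -- c (d y y) (d y y) = d (c y y) (c y y)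
      rw [hs'] at e1       -- c (d s y) (d s y) = d t (c y y)
      rw [congrFun hyd (c y y)] at e2  -- c (d y y) (d y y) = d t (c y y)
      exact e1.trans e2.symm
    have p_eq : d s y = d y y := q'inj key
    refine ⟨s, ?_⟩
    show c s s = t
    have e1 := h2 y s s  -- c (c y s) (c y s) = c (d s y) (c s s)
    have e2 := h2 y y s  -- c (c y y) (c y s) = c (d y y) (c y s)
    rw [hs', p_eq] at e1 -- c t t = c (d y y) (c s s)
    rw [congrFun hyc (c y s), hs'] at e2  -- c t t = c (d y y) t
    exact δinj _ (e1.symm.trans e2)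
  exact ⟨⟨qinj, qsurj⟩, ⟨q'inj, q'surj⟩⟩
end

section
/- Let (B,∘) be a group, f an endomorphism of (B,∘), and define a·b := a^{-1}∘b∘f(a) and a:b := f(b). Then (B,·,:) is a q-cycle set. Moreover, (B,·,:) is regular if and only if f is bijective. -/
theorem stmt_10 {B : Type*} [Group B] (f : B →* B)
    (d c : B → B → B)
    (hd : ∀ a b, d a b = a⁻¹ * b * f a)
    (hc : ∀ a b, c a b = f b) :
    ((∀ x, Function.Bijective (fun y => d x y)) ∧
     (∀ x y z, d (d x y) (d x z) = d (c y x) (d y z)) ∧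
     (∀ x y z, c (c x y) (c x z) = c (d y x) (c y z)) ∧
     (∀ x y z, c (d x y) (d x z) = d (c y x) (c y z))) ∧
    ((∀ x, Function.Bijective (fun y => c x y)) ↔ Function.Bijective f) := by
  constructor
  · refine ⟨?_, ?_, ?_, ?_⟩
    · intro x
      constructor
      · intro a b h
        simp only [hd] at h
        exact mul_left_cancel (mul_right_cancel h)
      · intro b
        exact ⟨x * b * (f x)⁻¹, by simp [hd, mul_assoc]⟩
    · intro x y z
      simp [hd, hc, mul_assoc]
    · intro x y z
      simp [hc]
    · intro x y z
      simp [hd, hc, mul_assoc]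
  · constructor
    · intro h
      have := h 1
      simpa [hc] using this
    · intro h x
      simpa [hc] using h
end

section
/- Let X be a left quasi-normal semigroup. Then the map r: X×X → X×X given by r(x,y) = (y, xy) is a set-theoretic solution of the Yang-Baxter equation and satisfies r⁵ = r³. -/
theorem stmt_12 {X : Type*} [Semigroup X]
    (hqn : ∀ x y z : X, x * y * z = x * z * y * z)
    (r : X × X → X × X)
    (hr : ∀ x y, r (x, y) = (y, x * y)) :
    (ybeR1 r ∘ ybeR2 r ∘ ybeR1 r = ybeR2 r ∘ ybeR1 r ∘ ybeR2 r) ∧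
    r^[5] = r^[3] := by
  -- key lemmas
  have A : ∀ x y : X, (y*(x*y)) * ((x*y)*(y*(x*y))) = y*(x*y) := by
    intro x y
    set a := x*y with ha
    calc (y*a)*(a*(y*a)) = (y*a)*a*y*a := by simp only [mul_assoc]
      _ = (y*a)*y*a := (hqn (y*a) y a).symm
      _ = y*y*a := (hqn y y a).symm
      _ = y*a := by rw [ha]; simpa only [mul_assoc] using (hqn y x y).symm
  have B : ∀ x y : X, ((x*y)*(y*(x*y))) * (y*(x*y)) = (x*y)*(y*(x*y)) := by
    intro x y
    set a := x*y with ha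
    calc (a*(y*a))*(y*a) = (a*y)*a*y*a := by simp only [mul_assoc]
      _ = (a*y)*y*a := (hqn (a*y) y a).symm
      _ = a*(y*a) := by
            rw [ha]
            simpa only [mul_assoc] using congrArg (· * (x*y)) (hqn x y y).symm
  constructor
  · funext p
    obtain ⟨x, y, z⟩ := p
    simp only [ybeR1, ybeR2, Function.comp_apply, hr]
    refine Prod.ext rfl (Prod.ext rfl ?_)
    simpa only [mul_assoc] using hqn x y z
  · funext p
    obtain ⟨x, y⟩ := p
    simp only [Function.iterate_succ, Function.iterate_zero, Function.comp_apply, id_eq, hr]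
    exact Prod.ext (A x y) (by rw [A x y]; exact B x y)
end

section
/- Let (X,·,:) be a q-cycle set, S a set, α: X×X×S → Sym(S) and α': X×X×S → S^S satisfying the three dynamical pair conditions: α_{(x·y),(x·z)}(α_{(x,y)}(s,t), α_{(x,z)}(s,u)) = α_{(y:x),(y·z)}(α'_{(y,x)}(t,s), α_{(y,z)}(t,u)); α'_{(x:y),(x:z)}(α'_{(x,y)}(s,t), α'_{(x,z)}(s,u)) = α'_{(y·x),(y:z)}(α_{(y,x)}(t,s), α'_{(y,z)}(t,u)); α'_{(x·y),(x·z)}(α_{(x,y)}(s,t), α_{(x,z)}(s,u)) = α_{(y:x),(y:z)}(α'_{(y,x)}(t,s), α'_{(y,z)}(t,u)) for all x,y,z ∈ X and s,t,u ∈ S. Then X×S with operations (x,s)·(y,t) := (x·y, α_{(x,y)}(s,t)) and (x,s):(y,t) := (x:y, α'_{(x,y)}(s,t)) is a q-cycle set. -/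
theorem stmt_14 {X S : Type*} (d c : X → X → X)
    (hσ : ∀ x, Function.Bijective (fun y => d x y))
    (h1 : ∀ x y z, d (d x y) (d x z) = d (c y x) (d y z))
    (h2 : ∀ x y z, c (c x y) (c x z) = c (d y x) (c y z))
    (h3 : ∀ x y z, c (d x y) (d x z) = d (c y x) (c y z))
    (α α' : X → X → S → S → S)
    (hα : ∀ x y s, Function.Bijective (α x y s))
    (hd1 : ∀ x y z : X, ∀ s t u : S,
      α (d x y) (d x z) (α x y s t) (α x z s u) = α (c y x) (d y z) (α' y x t s) (α y z t u))
    (hd2 : ∀ x y z : X, ∀ s t u : S,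
      α' (c x y) (c x z) (α' x y s t) (α' x z s u) = α' (d y x) (c y z) (α y x t s) (α' y z t u))
    (hd3 : ∀ x y z : X, ∀ s t u : S,
      α' (d x y) (d x z) (α x y s t) (α x z s u) = α (c y x) (c y z) (α' y x t s) (α' y z t u))
    (D C : X × S → X × S → X × S)
    (hD : ∀ p q : X × S, D p q = (d p.1 q.1, α p.1 q.1 p.2 q.2))
    (hC : ∀ p q : X × S, C p q = (c p.1 q.1, α' p.1 q.1 p.2 q.2)) :
    (∀ p, Function.Bijective (fun q => D p q)) ∧
    (∀ p q w, D (D p q) (D p w) = D (C q p) (D q w)) ∧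
    (∀ p q w, C (C p q) (C p w) = C (D q p) (C q w)) ∧
    (∀ p q w, C (D p q) (D p w) = D (C q p) (C q w)) := by
  refine ⟨?_, ?_, ?_, ?_⟩
  · rintro ⟨x, s⟩
    constructor
    · rintro ⟨y₁, t₁⟩ ⟨y₂, t₂⟩ h
      simp only [hD] at h
      obtain ⟨h1', h2'⟩ := Prod.mk.injEq .. ▸ h
      have hy : y₁ = y₂ := (hσ x).1 h1'
      subst hy
      exact Prod.ext rfl ((hα x y₁ s).1 h2')
    · rintro ⟨y', t'⟩
      obtain ⟨y, hy⟩ := (hσ x).2 y'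
      obtain ⟨t, ht⟩ := (hα x y s).2 t'
      exact ⟨(y, t), by simp [hD, hy, ht]⟩
  · rintro ⟨x, s⟩ ⟨y, t⟩ ⟨z, u⟩
    simp only [hD, hC]
    exact Prod.ext (h1 x y z) (hd1 x y z s t u)
  · rintro ⟨x, s⟩ ⟨y, t⟩ ⟨z, u⟩
    simp only [hD, hC]
    exact Prod.ext (h2 x y z) (hd2 x y z s t u)
  · rintro ⟨x, s⟩ ⟨y, t⟩ ⟨z, u⟩
    simp only [hD, hC]
    exact Prod.ext (h3 x y z) (hd3 x y z s t u)
end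

section
/- Let X and Y be q-cycle sets and p: Y → X a covering map (a surjective homomorphism all of whose fibers p^{-1}(x) have the same cardinality). Then there exists a set S and a dynamical pair (α,α') for X such that Y is isomorphic as a q-cycle set to the dynamical extension X×_{α,α'}S. -/
universe u v w

private def mkα {X : Type u} {Y : Type v} {S : Type w} (dY : Y → Y → Y) (φ : Y ≃ X × S)
    (x y : X) (s t : S) : S :=
  (φ (dY (φ.symm (x, s)) (φ.symm (y, t)))).2

private theorem mkα_apply {X : Type u} {Y : Type v} {S : Type w}
    {dX : X → X → X} (dY : Y → Y → Y) (φ : Y ≃ X × S)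
    (hd : ∀ a b, (φ (dY a b)).1 = dX (φ a).1 (φ b).1) (a b : Y) :
    φ (dY a b) = (dX (φ a).1 (φ b).1, mkα dY φ (φ a).1 (φ b).1 (φ a).2 (φ b).2) := by
  have h2 : mkα dY φ (φ a).1 (φ b).1 (φ a).2 (φ b).2 = (φ (dY a b)).2 := by
    simp [mkα]
  exact Prod.ext (hd a b) h2.symm

private theorem mkα_symm {X : Type u} {Y : Type v} {S : Type w}
    {dX : X → X → X} (dY : Y → Y → Y) (φ : Y ≃ X × S)
    (hd : ∀ a b, (φ (dY a b)).1 = dX (φ a).1 (φ b).1) (x y : X) (s t : S) :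
    φ.symm (dX x y, mkα dY φ x y s t) = dY (φ.symm (x, s)) (φ.symm (y, t)) := by
  rw [Equiv.symm_apply_eq, mkα_apply dY φ hd]
  simp

theorem stmt_16 {X : Type u} {Y : Type v}
    (dX cX : X → X → X) (dY cY : Y → Y → Y)
    (hσX : ∀ x, Function.Bijective (fun y => dX x y))
    (h1X : ∀ x y z, dX (dX x y) (dX x z) = dX (cX y x) (dX y z))
    (h2X : ∀ x y z, cX (cX x y) (cX x z) = cX (dX y x) (cX y z))
    (h3X : ∀ x y z, cX (dX x y) (dX x z) = dX (cX y x) (cX y z))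
    (hσY : ∀ x, Function.Bijective (fun y => dY x y))
    (h1Y : ∀ x y z, dY (dY x y) (dY x z) = dY (cY y x) (dY y z))
    (h2Y : ∀ x y z, cY (cY x y) (cY x z) = cY (dY y x) (cY y z))
    (h3Y : ∀ x y z, cY (dY x y) (dY x z) = dY (cY y x) (cY y z))
    (p : Y → X)
    (hphom : ∀ a b, p (dY a b) = dX (p a) (p b) ∧ p (cY a b) = cX (p a) (p b))
    (hpsurj : Function.Surjective p)
    (hfib : ∀ x₁ x₂ : X, Nonempty ({y // p y = x₁} ≃ {y // p y = x₂})) :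
    ∃ (S : Type v) (α α' : X → X → S → S → S),
      (∀ x y s, Function.Bijective (α x y s)) ∧
      (∀ x y z : X, ∀ s t u : S,
        α (dX x y) (dX x z) (α x y s t) (α x z s u)
          = α (cX y x) (dX y z) (α' y x t s) (α y z t u)) ∧
      (∀ x y z : X, ∀ s t u : S,
        α' (cX x y) (cX x z) (α' x y s t) (α' x z s u)
          = α' (dX y x) (cX y z) (α y x t s) (α' y z t u)) ∧
      (∀ x y z : X, ∀ s t u : S,
        α' (dX x y) (dX x z) (α x y s t) (α x z s u)
          = α (cX y x) (cX y z) (α' y x t s) (α' y z t u)) ∧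
      ∃ φ : Y ≃ X × S,
        (∀ a b, φ (dY a b) = (dX (φ a).1 (φ b).1, α (φ a).1 (φ b).1 (φ a).2 (φ b).2)) ∧
        (∀ a b, φ (cY a b) = (cX (φ a).1 (φ b).1, α' (φ a).1 (φ b).1 (φ a).2 (φ b).2)) := by
  classical
  rcases isEmpty_or_nonempty X with hX | hX
  · have hY : IsEmpty Y := ⟨fun y => hX.false (p y)⟩
    refine ⟨Y, fun x => isEmptyElim x, fun x => isEmptyElim x,
      fun x => isEmptyElim x, fun x => isEmptyElim x, fun x => isEmptyElim x,
      fun x => isEmptyElim x, Equiv.equivOfIsEmpty Y (X × Y),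
      fun a => isEmptyElim a, fun a => isEmptyElim a⟩
  · obtain ⟨x₀⟩ := hX
    let S : Type v := {y : Y // p y = x₀}
    let e : ∀ x : X, {y // p y = x} ≃ S := fun x => (hfib x x₀).some
    let φ : Y ≃ X × S :=
      (Equiv.sigmaFiberEquiv p).symm.trans
        ((Equiv.sigmaCongrRight e).trans (Equiv.sigmaEquivProd X S))
    have hfst : ∀ yy : Y, (φ yy).1 = p yy := fun _ => rfl
    have hd : ∀ a b, (φ (dY a b)).1 = dX (φ a).1 (φ b).1 := by
      intro a b; rw [hfst, hfst, hfst, (hphom a b).1]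
    have hc : ∀ a b, (φ (cY a b)).1 = cX (φ a).1 (φ b).1 := by
      intro a b; rw [hfst, hfst, hfst, (hphom a b).2]
    have hsd := mkα_symm dY φ hd
    have hsc := mkα_symm cY φ hc
    refine ⟨S, mkα dY φ, mkα cY φ, ?_, ?_, ?_, ?_, φ,
      mkα_apply dY φ hd, mkα_apply cY φ hc⟩
    · -- bijectivity
      intro x y s
      constructor
      · intro t t' h
        have h2 : φ.symm (dX x y, mkα dY φ x y s t)
            = φ.symm (dX x y, mkα dY φ x y s t') := by rw [h]
        rw [hsd, hsd] at h2
        have h3 := (hσY (φ.symm (x, s))).1 h2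
        have h4 := congrArg φ h3
        simp only [Equiv.apply_symm_apply, Prod.mk.injEq] at h4
        exact h4.2
      · intro u
        obtain ⟨b, hb⟩ := (hσY (φ.symm (x, s))).2 (φ.symm (dX x y, u))
        have h1 : (φ (dY (φ.symm (x, s)) b)).1 = dX x y := by
          rw [show dY (φ.symm (x, s)) b = (fun c => dY (φ.symm (x, s)) c) b from rfl, hb]
          simp
        rw [hd] at h1
        simp only [Equiv.apply_symm_apply] at h1
        have hpb : (φ b).1 = y := (hσX x).1 h1
        refine ⟨(φ b).2, ?_⟩
        have hby : φ.symm (y, (φ b).2) = b := by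
          rw [← hpb, Prod.mk.eta, Equiv.symm_apply_apply]
        calc mkα dY φ x y s (φ b).2
            = (φ (dY (φ.symm (x, s)) (φ.symm (y, (φ b).2)))).2 := rfl
          _ = (φ (dY (φ.symm (x, s)) b)).2 := by rw [hby]
          _ = u := by
              rw [show dY (φ.symm (x, s)) b = (fun c => dY (φ.symm (x, s)) c) b from rfl, hb]
              simp
    · intro x y z s t u
      calc mkα dY φ (dX x y) (dX x z) (mkα dY φ x y s t) (mkα dY φ x z s u)
          = (φ (dY (φ.symm (dX x y, mkα dY φ x y s t))
              (φ.symm (dX x z, mkα dY φ x z s u)))).2 := rfl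
        _ = (φ (dY (dY (φ.symm (x, s)) (φ.symm (y, t)))
              (dY (φ.symm (x, s)) (φ.symm (z, u))))).2 := by rw [hsd, hsd]
        _ = (φ (dY (cY (φ.symm (y, t)) (φ.symm (x, s)))
              (dY (φ.symm (y, t)) (φ.symm (z, u))))).2 := by rw [h1Y]
        _ = (φ (dY (φ.symm (cX y x, mkα cY φ y x t s))
              (φ.symm (dX y z, mkα dY φ y z t u)))).2 := by rw [hsc, hsd]
        _ = mkα dY φ (cX y x) (dX y z) (mkα cY φ y x t s) (mkα dY φ y z t u) := rfl
    · intro x y z s t u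
      calc mkα cY φ (cX x y) (cX x z) (mkα cY φ x y s t) (mkα cY φ x z s u)
          = (φ (cY (φ.symm (cX x y, mkα cY φ x y s t))
              (φ.symm (cX x z, mkα cY φ x z s u)))).2 := rfl
        _ = (φ (cY (cY (φ.symm (x, s)) (φ.symm (y, t)))
              (cY (φ.symm (x, s)) (φ.symm (z, u))))).2 := by rw [hsc, hsc]
        _ = (φ (cY (dY (φ.symm (y, t)) (φ.symm (x, s)))
              (cY (φ.symm (y, t)) (φ.symm (z, u))))).2 := by rw [h2Y]
        _ = (φ (cY (φ.symm (dX y x, mkα dY φ y x t s))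
              (φ.symm (cX y z, mkα cY φ y z t u)))).2 := by rw [hsd, hsc]
        _ = mkα cY φ (dX y x) (cX y z) (mkα dY φ y x t s) (mkα cY φ y z t u) := rfl
    · intro x y z s t u
      calc mkα cY φ (dX x y) (dX x z) (mkα dY φ x y s t) (mkα dY φ x z s u)
          = (φ (cY (φ.symm (dX x y, mkα dY φ x y s t))
              (φ.symm (dX x z, mkα dY φ x z s u)))).2 := rfl
        _ = (φ (cY (dY (φ.symm (x, s)) (φ.symm (y, t)))
              (dY (φ.symm (x, s)) (φ.symm (z, u))))).2 := by rw [hsd, hsd]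
        _ = (φ (dY (cY (φ.symm (y, t)) (φ.symm (x, s)))
              (cY (φ.symm (y, t)) (φ.symm (z, u))))).2 := by rw [h3Y]
        _ = (φ (dY (φ.symm (cX y x, mkα cY φ y x t s))
              (φ.symm (cX y z, mkα cY φ y z t u)))).2 := by rw [hsc, hsc]
        _ = mkα dY φ (cX y x) (cX y z) (mkα cY φ y x t s) (mkα cY φ y z t u) := rfl
end

section
/- Let X and S be q-cycle sets and θ: X → Aut(S) a map with θ_{x·y} ∘ θ_x = θ_{y:x} ∘ θ_y for all x,y ∈ X. Then X×S with operations (x,s)·(y,t) := (x·y, θ_{x·y}(s)·θ_{y:x}(t)) and (x,s):(y,t) := (x:y, θ_{x:y}(s):θ_{y·x}(t)) is a q-cycle set (the semidirect product of X and S). -/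
theorem stmt_17 {X S : Type*} (dX cX : X → X → X) (dS cS : S → S → S)
    (hσX : ∀ x, Function.Bijective (fun y => dX x y))
    (h1X : ∀ x y z, dX (dX x y) (dX x z) = dX (cX y x) (dX y z))
    (h2X : ∀ x y z, cX (cX x y) (cX x z) = cX (dX y x) (cX y z))
    (h3X : ∀ x y z, cX (dX x y) (dX x z) = dX (cX y x) (cX y z))
    (hσS : ∀ s, Function.Bijective (fun t => dS s t))
    (h1S : ∀ s t u, dS (dS s t) (dS s u) = dS (cS t s) (dS t u))
    (h2S : ∀ s t u, cS (cS s t) (cS s u) = cS (dS t s) (cS t u))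
    (h3S : ∀ s t u, cS (dS s t) (dS s u) = dS (cS t s) (cS t u))
    (θ : X → S → S)
    -- each θ_x is an automorphism of the q-cycle set S
    (hθbij : ∀ x, Function.Bijective (θ x))
    (hθd : ∀ x s t, θ x (dS s t) = dS (θ x s) (θ x t))
    (hθc : ∀ x s t, θ x (cS s t) = cS (θ x s) (θ x t))
    -- compatibility: θ_{x·y} ∘ θ_x = θ_{y:x} ∘ θ_y
    (hcomp : ∀ x y, θ (dX x y) ∘ θ x = θ (cX y x) ∘ θ y)
    (D C : X × S → X × S → X × S)
    (hD : ∀ p q : X × S, D p q = (dX p.1 q.1, dS (θ (dX p.1 q.1) p.2) (θ (cX q.1 p.1) q.2)))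
    (hC : ∀ p q : X × S, C p q = (cX p.1 q.1, cS (θ (cX p.1 q.1) p.2) (θ (dX q.1 p.1) q.2))) :
    (∀ p, Function.Bijective (fun q => D p q)) ∧
    (∀ p q w, D (D p q) (D p w) = D (C q p) (D q w)) ∧
    (∀ p q w, C (C p q) (C p w) = C (D q p) (C q w)) ∧
    (∀ p q w, C (D p q) (D p w) = D (C q p) (C q w)) := by
  have hc : ∀ a b s, θ (dX a b) (θ a s) = θ (cX b a) (θ b s) := fun a b s =>
    congrFun (hcomp a b) s
  have K1 : ∀ x y z u, θ (cX (dX x z) (dX x y)) (θ (cX z x) u)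
      = θ (cX (dX y z) (cX y x)) (θ (cX z y) u) := by
    intro x y z u
    obtain ⟨v, rfl⟩ := (hθbij z).2 u
    calc θ (cX (dX x z) (dX x y)) (θ (cX z x) (θ z v))
        = θ (cX (dX x z) (dX x y)) (θ (dX x z) (θ x v)) := by rw [hc x z]
      _ = θ (dX (dX x y) (dX x z)) (θ (dX x y) (θ x v)) := (hc (dX x y) (dX x z) _).symm
      _ = θ (dX (dX x y) (dX x z)) (θ (cX y x) (θ y v)) := by rw [hc x y]
      _ = θ (dX (cX y x) (dX y z)) (θ (cX y x) (θ y v)) := by rw [h1X]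
      _ = θ (cX (dX y z) (cX y x)) (θ (dX y z) (θ y v)) := hc (cX y x) (dX y z) _
      _ = θ (cX (dX y z) (cX y x)) (θ (cX z y) (θ z v)) := by rw [hc y z]
  have K2 : ∀ x y z u, θ (dX (cX x z) (cX x y)) (θ (dX z x) u)
      = θ (dX (cX y z) (dX y x)) (θ (dX z y) u) := by
    intro x y z u
    obtain ⟨v, rfl⟩ := (hθbij z).2 u
    calc θ (dX (cX x z) (cX x y)) (θ (dX z x) (θ z v))
        = θ (dX (cX x z) (cX x y)) (θ (cX x z) (θ x v)) := by rw [hc z x]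
      _ = θ (cX (cX x y) (cX x z)) (θ (cX x y) (θ x v)) := hc (cX x z) (cX x y) _
      _ = θ (cX (cX x y) (cX x z)) (θ (dX y x) (θ y v)) := by rw [hc y x]
      _ = θ (cX (dX y x) (cX y z)) (θ (dX y x) (θ y v)) := by rw [h2X]
      _ = θ (dX (cX y z) (dX y x)) (θ (cX y z) (θ y v)) := (hc (cX y z) (dX y x) _).symm
      _ = θ (dX (cX y z) (dX y x)) (θ (dX z y) (θ z v)) := by rw [hc z y]
  have K3 : ∀ x y z u, θ (cX (cX y z) (cX y x)) (θ (dX z y) u)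
      = θ (dX (dX x z) (dX x y)) (θ (cX z x) u) := by
    intro x y z u
    obtain ⟨v, rfl⟩ := (hθbij z).2 u
    calc θ (cX (cX y z) (cX y x)) (θ (dX z y) (θ z v))
        = θ (cX (cX y z) (cX y x)) (θ (cX y z) (θ y v)) := by rw [hc z y]
      _ = θ (dX (cX y x) (cX y z)) (θ (cX y x) (θ y v)) := (hc (cX y x) (cX y z) _).symm
      _ = θ (cX (dX x y) (dX x z)) (θ (cX y x) (θ y v)) := by rw [h3X]
      _ = θ (cX (dX x y) (dX x z)) (θ (dX x y) (θ x v)) := by rw [hc x y]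
      _ = θ (dX (dX x z) (dX x y)) (θ (dX x z) (θ x v)) := (hc (dX x z) (dX x y) _).symm
      _ = θ (dX (dX x z) (dX x y)) (θ (cX z x) (θ z v)) := by rw [hc x z]
  refine ⟨?_, ?_, ?_, ?_⟩
  · intro p
    constructor
    · intro q q' h
      simp only [hD, Prod.mk.injEq] at h
      obtain ⟨h1, h2⟩ := h
      have hq1 : q.1 = q'.1 := (hσX p.1).1 h1
      rw [hq1] at h2
      have := (hθbij (cX q'.1 p.1)).1 ((hσS _).1 h2)
      exact Prod.ext hq1 this
    · intro r
      obtain ⟨y, hy⟩ := (hσX p.1).2 r.1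
      obtain ⟨v, hv⟩ := (hσS (θ (dX p.1 y) p.2)).2 r.2
      obtain ⟨t, ht⟩ := (hθbij (cX y p.1)).2 v
      refine ⟨(y, t), ?_⟩
      simp only [hD]
      rw [ht]
      exact Prod.ext hy hv
  · rintro ⟨x, s⟩ ⟨y, t⟩ ⟨z, u⟩
    simp only [hD, hC, Prod.mk.injEq]
    refine ⟨h1X x y z, ?_⟩
    simp only [hθd, hθc]
    rw [← hc (cX y x) (dX y z) t]
    rw [K1 x y z u]
    rw [← h1X x y z]
    rw [hc (dX x y) (dX x z) s]
    rw [h1S]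
  · rintro ⟨x, s⟩ ⟨y, t⟩ ⟨z, u⟩
    simp only [hD, hC, Prod.mk.injEq]
    refine ⟨h2X x y z, ?_⟩
    simp only [hθd, hθc]
    rw [hc (cX y z) (dX y x) t]
    rw [K2 x y z u]
    rw [← h2X x y z]
    rw [hc (cX x z) (cX x y) s]
    rw [h2S]
  · rintro ⟨x, s⟩ ⟨y, t⟩ ⟨z, u⟩
    simp only [hD, hC, Prod.mk.injEq]
    refine ⟨h3X x y z, ?_⟩
    simp only [hθd, hθc]
    rw [← hc (cX y x) (cX y z) t]
    rw [K3 x y z u]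
    rw [← h3X x y z]
    rw [hc (dX x z) (dX x y) s]
    rw [h3S]
end

section
/- Let (B,+,∘) be a left semi-brace (left cancellative semigroup (B,+), group (B,∘), with a∘(b+c) = a∘b + a∘(a⁻+c) for all a,b,c). Define a·b := a⁻∘(a+b) and a:b := a⁻∘(b+a). Then (B,·,:) is a q-cycle set and its two squaring maps coincide: a·a = a:a for all a ∈ B. -/
theorem stmt_18 {B : Type*} [Group B] (p : B → B → B)
    -- (B,+) is a semigroup (+ written as p) which is left cancellative
    (hassoc : ∀ a b c : B, p (p a b) c = p a (p b c))
    (hcanc : ∀ a b c : B, p a b = p a c → b = c)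
    -- left semi-brace axiom: a∘(b+c) = a∘b + a∘(a⁻+c)
    (hbrace : ∀ a b c : B, a * p b c = p (a * b) (a * p a⁻¹ c))
    (d c : B → B → B)
    (hd : ∀ a b, d a b = a⁻¹ * p a b)
    (hc : ∀ a b, c a b = a⁻¹ * p b a) :
    ((∀ x, Function.Bijective (fun y => d x y)) ∧
     (∀ x y z, d (d x y) (d x z) = d (c y x) (d y z)) ∧
     (∀ x y z, c (c x y) (c x z) = c (d y x) (c y z)) ∧
     (∀ x y z, c (d x y) (d x z) = d (c y x) (c y z))) ∧
    (∀ a, d a a = c a a) := by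
  have E1 : ∀ a b cc : B, a * (b * p b⁻¹ cc) = p a ((a * b) * p (a * b)⁻¹ cc) := by
    intro a b cc
    have h := hbrace (a * b) b⁻¹ cc
    rw [mul_inv_cancel_right] at h
    rw [← h, mul_assoc]
  have hA : ∀ a b cc : B, a * p a⁻¹ (b * p b⁻¹ cc) = (a * b) * p (a * b)⁻¹ cc := by
    intro a b cc
    have h := E1 a⁻¹ (a * b) cc
    rw [inv_mul_cancel_left] at h
    rw [← h, mul_inv_cancel_left]
  have hone : ∀ cc : B, p 1 cc = cc := by
    intro cc
    have h := hA 1 1 cc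
    simp only [one_mul, mul_one, inv_one] at h
    exact hcanc 1 _ _ h
  have hL : ∀ a cc : B, a * p a⁻¹ (a⁻¹ * p a cc) = cc := by
    intro a cc
    have h := hA a a⁻¹ cc
    simpa [hone] using h
  have hR : ∀ a cc : B, a⁻¹ * p a (a * p a⁻¹ cc) = cc := by
    intro a cc
    have h := hA a⁻¹ a cc
    simpa [hone] using h
  have hsurj : ∀ a t : B, ∃ y, p a y = t := by
    intro a t
    refine ⟨a * p a⁻¹ (a⁻¹ * t), ?_⟩
    have h := hR a (a⁻¹ * t)
    exact mul_left_cancel h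
  have key : ∀ a w t : B, (a⁻¹ * w)⁻¹ * p (a⁻¹ * w) (a⁻¹ * p a t) = w⁻¹ * p w t := by
    intro a w t
    have h := hbrace a⁻¹ w t
    rw [inv_inv] at h
    rw [← h]
    group
  have key2 : ∀ a w t : B,
      (a⁻¹ * p a t)⁻¹ * p (a⁻¹ * w) (a⁻¹ * p a t) = (p a t)⁻¹ * p w t := by
    intro a w t
    have h := hbrace a⁻¹ w t
    rw [inv_inv] at h
    rw [← h]
    group
  refine ⟨⟨?_, ?_, ?_, ?_⟩, ?_⟩
  · intro x
    simp only [hd]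
    refine Function.bijective_iff_has_inverse.2 ⟨fun y => x * p x⁻¹ y, ?_, ?_⟩
    · intro y; exact hL x y
    · intro y; exact hR x y
  · intro x y z
    simp only [hd, hc]
    exact (key x (p x y) z).trans (key y (p x y) z).symm
  · intro x y z
    simp only [hd, hc]
    obtain ⟨c', hc'⟩ := hsurj x (p y x)
    have h1 := key2 x (p z x) c'
    rw [hc'] at h1
    rw [h1, key2 y (p z y) x, hassoc, hc', ← hassoc]
  · intro x y z
    simp only [hd, hc]
    obtain ⟨c'', hc''⟩ := hsurj y (p z y)
    have h2 := key y (p x y) c''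
    rw [hc''] at h2
    rw [key2 x (p x z) y, h2, hassoc, ← hc'', ← hassoc]
  · intro a
    rw [hd, hc]
end
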